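/- In the additive setting below, let x₀ ∈ Ch(𝒜), y₀ ∈ Ch(ℬ) and s > 0. Then: (i) x₀ ∈ I¹_{y₀} if and only if y₀ ∈ J^s_{x₀}; (ii) y₀ ∈ J¹_{x₀} if and only if x₀ ∈ I^s_{y₀}. -/

import Mathlib

open scoped ZeroAtInfty Pointwise
open Filter Topology

set_option maxHeartbeats 1000000
set_option synthInstance.maxHeartbeats 1000000

/-- The (inc) property for a two-variable function `φ : ℂ → ℂ → ℝ`. -/
def IncProp (φ : ℂ → ℂ → ℝ) : Prop :=
  (∀ s₁ s₂ t : ℂ, ‖s₁‖ ≤ ‖s₂‖ →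
      φ s₁ t ≤ φ s₂ t ∧ φ t s₁ ≤ φ t s₂) ∧
  (∀ s₁ s₂ t : ℂ, ‖s₁‖ < ‖s₂‖ → t ≠ 0 →
      φ s₁ t < φ s₂ t ∧ φ t s₁ < φ t s₂)

/-- The (con) property. -/
def ConProp (φ : ℂ → ℂ → ℝ) : Prop :=
  ∀ (n : ℕ), 0 < n → ∀ (s : Fin n → ℂ) (t : ℂ),
    φ ((1 / (n : ℂ)) * ∑ i, s i) t ≤ (1 / (n : ℝ)) * ∑ i, φ (s i) t ∧
    φ t ((1 / (n : ℂ)) * ∑ i, s i) ≤ (1 / (n : ℝ)) * ∑ i, φ t (s i)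

/-- sup of φ(f,g) over the space (the supremum norm of the nonnegative function φ(f,g)). -/
noncomputable def supPhi {X : Type*} (φ : ℂ → ℂ → ℝ) (f g : X → ℂ) : ℝ :=
  ⨆ x, φ (f x) (g x)

noncomputable def rhoPlus {X : Type*} (φ : ℂ → ℂ → ℝ) (f g : X → ℂ) : ℝ :=
  supPhi φ f g + supPhi φ g f

noncomputable def rhoMax {X : Type*} (φ : ℂ → ℂ → ℝ) (f g : X → ℂ) : ℝ :=
  max (supPhi φ f g) (supPhi φ g f)

noncomputable def rhoPlusScalar (φ : ℂ → ℂ → ℝ) (r s : ℂ) : ℝ := φ r s + φ s r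

noncomputable def rhoMaxScalar (φ : ℂ → ℂ → ℝ) (r s : ℂ) : ℝ := max (φ r s) (φ s r)

/-- Generic ρ, with a Boolean selecting between ρ₊ (true) and ρ_max (false). -/
noncomputable def rhoGen {X : Type*} (c : Bool) (φ : ℂ → ℂ → ℝ) (f g : X → ℂ) : ℝ :=
  if c then rhoPlus φ f g else rhoMax φ f g

noncomputable def rhoGenScalar (c : Bool) (φ : ℂ → ℂ → ℝ) (r s : ℂ) : ℝ :=
  if c then rhoPlusScalar φ r s else rhoMaxScalar φ r s

/-- `x₀` is a strong boundary point of `A ⊆ C₀(X)`. -/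
def IsStrongBoundaryPoint {X : Type*} [TopologicalSpace X]
    (A : Set C₀(X, ℂ)) (x₀ : X) : Prop :=
  ∀ ε > (0 : ℝ), ∀ V ∈ 𝓝 x₀, ∃ f ∈ A, f x₀ = 1 ∧ ‖f‖ = 1 ∧
    ∀ x ∉ V, ‖f x‖ < ε

/-- V_{x₀}(A). -/
def Vset {X : Type*} [TopologicalSpace X] (A : Set C₀(X, ℂ)) (x₀ : X) : Set C₀(X, ℂ) :=
  {f ∈ A | f x₀ = 1 ∧ ‖f‖ = 1}

/-- F_{x₀}(A). -/
def Fset {X : Type*} [TopologicalSpace X] (A : Set C₀(X, ℂ)) (x₀ : X) : Set C₀(X, ℂ) :=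
  {f ∈ A | ‖f x₀‖ = 1 ∧ ‖f‖ = 1}

/-- The maximum modulus set M(f). -/
def maxSet {X : Type*} [TopologicalSpace X] (f : C₀(X, ℂ)) : Set X :=
  {x | ‖f x‖ = ‖f‖}

noncomputable instance instNACGzeroInftyC {X : Type*} [TopologicalSpace X] : NormedAddCommGroup C₀(X, ℂ) :=
  ZeroAtInftyContinuousMap.instNormedAddCommGroup

/-- Evaluation at a point, as a continuous linear functional on a subspace of C₀(X). -/
noncomputable def evalDual {X : Type*} [TopologicalSpace X]
    (𝒜 : Submodule ℂ C₀(X, ℂ)) (x : X) : StrongDual ℂ 𝒜 :=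
  LinearMap.mkContinuous
    { toFun := fun f => (f : C₀(X, ℂ)) x
      map_add' := fun f g => rfl
      map_smul' := fun c f => rfl }
    1
    (fun f => by
      rw [one_mul, ← Submodule.norm_coe]
      exact ((f : C₀(X, ℂ)).toBCF.norm_coe_le_norm x).trans_eq
        ZeroAtInftyContinuousMap.norm_toBCF_eq_norm)

/-- `x` lies in the Choquet boundary of a subspace `𝒜` of `C₀(X)`: the evaluation functional is
an extreme point of the closed unit ball of the dual space. -/
def InChoquetBoundary {X : Type*} [TopologicalSpace X]
    (𝒜 : Submodule ℂ C₀(X, ℂ)) (x : X) : Prop :=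
  evalDual 𝒜 x ∈
    Set.extremePoints ℝ (Metric.closedBall (0 : StrongDual ℂ 𝒜) 1)

/-- A function algebra on `X`: a closed subalgebra of `C₀(X)` strongly separating points. -/
def IsFunctionAlgebra {X : Type*} [TopologicalSpace X]
    (𝒜 : NonUnitalSubalgebra ℂ C₀(X, ℂ)) : Prop :=
  IsClosed (𝒜 : Set C₀(X, ℂ)) ∧
  (∀ x y : X, x ≠ y → ∃ f ∈ 𝒜, f x ≠ f y) ∧
  (∀ x : X, ∃ g ∈ 𝒜, g x ≠ (0 : ℂ))

/-- `|A| ⊆ |𝒜|`. -/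
def ModulusSubset {X : Type*} [TopologicalSpace X]
    (A 𝒜 : Set C₀(X, ℂ)) : Prop :=
  ∀ f ∈ A, ∃ g ∈ 𝒜, ∀ x, ‖f x‖ = ‖g x‖

/-- The positive elements of a subset `S` of `C₀(X)`. -/
def posPartSet {X : Type*} [TopologicalSpace X] (S : Set C₀(X, ℂ)) : Set C₀(X, ℂ) :=
  {f ∈ S | ∀ x, ∃ r : ℝ, 0 ≤ r ∧ f x = r}

/-! The isometry `T` preserves norms, since `ρ(f, f)` is a strictly increasing function of `‖f‖`.
If `f` and `g` peak at a common point then `ρ(f, g) = ρ(‖f‖, ‖g‖)`, while if the sets where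
`f` and `g` are close to their norms are disjoint then `ρ(f, g) < ρ(‖f‖, ‖g‖)` by the strict
part of (inc). Strong boundary points supply functions peaking at `x₀` (or `y₀`) and small off
any neighbourhood of it, so a point where `f` fails to peak can be separated from the peak of
another function on one side of `T`, while both peak together on the other side, contradicting
`ρ(Tf, Tg) = ρ(f, g)`. -/

namespace ZeroAtInftyContinuousMap

variable {Z β : Type*} [TopologicalSpace Z] [NormedAddCommGroup β]

theorem norm_apply_le (f : C₀(Z, β)) (z : Z) : ‖f z‖ ≤ ‖f‖ :=
  (f.toBCF.norm_coe_le_norm z).trans_eq norm_toBCF_eq_norm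

theorem exists_norm_apply_eq_norm [Nonempty Z] (f : C₀(Z, β)) : ∃ z, ‖f z‖ = ‖f‖ := by
  obtain ⟨z, hz⟩ : ∃ z, ∀ w, ‖f w‖ ≤ ‖f z‖ := by
    by_cases hf : ∃ z₀, f z₀ ≠ 0
    · obtain ⟨z₀, hz₀⟩ := hf
      refine (map_continuous f).norm.exists_forall_ge' z₀ ?_
      have hlim : Tendsto (fun z => ‖f z‖) (cocompact Z) (𝓝 0) := by
        simpa using (zero_at_infty f).norm
      filter_upwards [hlim.eventually (gt_mem_nhds (norm_pos_iff.2 hz₀))] with z hz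
      exact hz.le
    · push Not at hf
      exact ⟨Classical.arbitrary Z, fun w => by simp [hf]⟩
  refine ⟨z, (norm_apply_le f z).antisymm ?_⟩
  rw [← norm_toBCF_eq_norm]
  exact (BoundedContinuousFunction.norm_le (norm_nonneg _)).2 hz

end ZeroAtInftyContinuousMap

open ZeroAtInftyContinuousMap

section Scalar

variable {φ : ℂ → ℂ → ℝ}

theorem IncProp.mono (hinc : IncProp φ) {a a' b b' : ℂ} (ha : ‖a‖ ≤ ‖a'‖) (hb : ‖b‖ ≤ ‖b'‖) :
    φ a b ≤ φ a' b' :=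
  (hinc.1 a a' b ha).1.trans (hinc.1 b b' a' hb).2

theorem IncProp.congr (hinc : IncProp φ) {a a' b b' : ℂ} (ha : ‖a‖ = ‖a'‖) (hb : ‖b‖ = ‖b'‖) :
    φ a b = φ a' b' :=
  (hinc.mono ha.le hb.le).antisymm (hinc.mono ha.ge hb.ge)

theorem IncProp.strictMonoOn_rhoGenScalar_diag (hinc : IncProp φ) (c : Bool) :
    StrictMonoOn (fun u : ℝ => rhoGenScalar c φ u u) (Set.Ici 0) := by
  intro u hu v hv huv
  have hnorm : ‖(u : ℂ)‖ < ‖(v : ℂ)‖ := by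
    rwa [Complex.norm_of_nonneg hu, Complex.norm_of_nonneg hv]
  have hv0 : (v : ℂ) ≠ 0 := Complex.ofReal_ne_zero.2 (hu.out.trans_lt huv).ne'
  have hlt : φ u u < φ v v := ((hinc.1 _ _ _ hnorm.le).1).trans_lt (hinc.2 _ _ _ hnorm hv0).2
  cases c
  · exact max_lt_max hlt hlt
  · exact add_lt_add hlt hlt

end Scalar

section Peaks

variable {Z W : Type*} [TopologicalSpace Z] [TopologicalSpace W] {φ : ℂ → ℂ → ℝ}

theorem supPhi_eq_of_mem_maxSet (hinc : IncProp φ) {F G : C₀(Z, ℂ)} {z₀ : Z}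
    (hF : z₀ ∈ maxSet F) (hG : z₀ ∈ maxSet G) : supPhi φ F G = φ ‖F‖ ‖G‖ := by
  have hbound : ∀ z, φ (F z) (G z) ≤ φ ‖F‖ ‖G‖ := fun z =>
    hinc.mono (by simpa using norm_apply_le F z) (by simpa using norm_apply_le G z)
  have : Nonempty Z := ⟨z₀⟩
  refine (ciSup_le hbound).antisymm ?_
  calc φ ‖F‖ ‖G‖ = φ (F z₀) (G z₀) := hinc.congr (by simpa using hF.symm) (by simpa using hG.symm)
    _ ≤ supPhi φ F G := le_ciSup ⟨_, Set.forall_mem_range.2 hbound⟩ z₀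

theorem supPhi_lt_of_forall_or (hinc : IncProp φ) [Nonempty Z] {F G : C₀(Z, ℂ)} {a b : ℝ}
    (ha : 0 ≤ a) (hb : 0 ≤ b) (haF : a < ‖F‖) (hbG : b < ‖G‖)
    (hsep : ∀ z, ‖F z‖ ≤ a ∨ ‖G z‖ ≤ b) : supPhi φ F G < φ ‖F‖ ‖G‖ := by
  have hF0 : (‖F‖ : ℂ) ≠ 0 := Complex.ofReal_ne_zero.2 (ha.trans_lt haF).ne'
  have hG0 : (‖G‖ : ℂ) ≠ 0 := Complex.ofReal_ne_zero.2 (hb.trans_lt hbG).ne'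
  have hbound : ∀ z, φ (F z) (G z) ≤ max (φ a ‖G‖) (φ ‖F‖ b) := by
    intro z
    rcases hsep z with hz | hz
    · exact le_max_of_le_left <| hinc.mono (by simpa [abs_of_nonneg ha] using hz)
        (by simpa using norm_apply_le G z)
    · exact le_max_of_le_right <| hinc.mono (by simpa using norm_apply_le F z)
        (by simpa [abs_of_nonneg hb] using hz)
  refine (ciSup_le hbound).trans_lt (max_lt ?_ ?_)
  · exact (hinc.2 _ _ _ (by simpa [abs_of_nonneg ha] using haF) hG0).1
  · exact (hinc.2 _ _ _ (by simpa [abs_of_nonneg hb] using hbG) hF0).2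

theorem rhoGen_eq_of_mem_maxSet (hinc : IncProp φ) (c : Bool) {F G : C₀(Z, ℂ)} {z₀ : Z}
    (hF : z₀ ∈ maxSet F) (hG : z₀ ∈ maxSet G) : rhoGen c φ F G = rhoGenScalar c φ ‖F‖ ‖G‖ := by
  cases c <;>
  simp only [rhoGen, rhoGenScalar, rhoPlus, rhoMax, rhoPlusScalar, rhoMaxScalar,
    supPhi_eq_of_mem_maxSet hinc hF hG, supPhi_eq_of_mem_maxSet hinc hG hF]

theorem rhoGen_lt_of_forall_or (hinc : IncProp φ) (c : Bool) [Nonempty Z] {F G : C₀(Z, ℂ)}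
    {a b : ℝ} (ha : 0 ≤ a) (hb : 0 ≤ b) (haF : a < ‖F‖) (hbG : b < ‖G‖)
    (hsep : ∀ z, ‖F z‖ ≤ a ∨ ‖G z‖ ≤ b) : rhoGen c φ F G < rhoGenScalar c φ ‖F‖ ‖G‖ := by
  have hFG := supPhi_lt_of_forall_or hinc ha hb haF hbG hsep
  have hGF := supPhi_lt_of_forall_or hinc hb ha hbG haF fun z => (hsep z).symm
  cases c
  · exact max_lt_max hFG hGF
  · exact add_lt_add hFG hGF

theorem norm_eq_of_rhoGen_self_eq (hinc : IncProp φ) (c : Bool) [Nonempty Z] [Nonempty W]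
    {F : C₀(Z, ℂ)} {G : C₀(W, ℂ)} (h : rhoGen c φ G G = rhoGen c φ F F) : ‖G‖ = ‖F‖ := by
  obtain ⟨z, hz⟩ := exists_norm_apply_eq_norm F
  obtain ⟨w, hw⟩ := exists_norm_apply_eq_norm G
  rw [rhoGen_eq_of_mem_maxSet hinc c hz hz, rhoGen_eq_of_mem_maxSet hinc c hw hw] at h
  exact (hinc.strictMonoOn_rhoGenScalar_diag c).injOn (norm_nonneg G) (norm_nonneg F) h

theorem exists_lt_norm_apply_of_rhoGen_eq (hinc : IncProp φ) {c : Bool} [Nonempty W]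
    {F G : C₀(Z, ℂ)} {F' G' : C₀(W, ℂ)} {z₀ : Z} (hF : z₀ ∈ maxSet F) (hG : z₀ ∈ maxSet G)
    (hnF : ‖F'‖ = ‖F‖) (hnG : ‖G'‖ = ‖G‖) (hρ : rhoGen c φ F' G' = rhoGen c φ F G)
    {a b : ℝ} (ha : 0 ≤ a) (hb : 0 ≤ b) (haF : a < ‖F'‖) (hbG : b < ‖G'‖) :
    ∃ w, a < ‖F' w‖ ∧ b < ‖G' w‖ := by
  by_contra! hsep
  have hlt := rhoGen_lt_of_forall_or hinc c ha hb haF hbG fun w =>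
    (le_or_gt _ _).imp_right (hsep w)
  rw [hρ, rhoGen_eq_of_mem_maxSet hinc c hF hG, hnF, hnG] at hlt
  exact hlt.false

end Peaks

section Boundary

variable {X : Type*} [TopologicalSpace X]

theorem ofReal_smul_mem_posPartSet {S : Submodule ℂ C₀(X, ℂ)} {r : ℝ} (hr : 0 ≤ r)
    {f : C₀(X, ℂ)} (hf : f ∈ posPartSet (S : Set C₀(X, ℂ))) :
    (r : ℂ) • f ∈ posPartSet (S : Set C₀(X, ℂ)) := by
  refine ⟨S.smul_mem _ hf.1, fun x => ?_⟩
  obtain ⟨p, hp, hfx⟩ := hf.2 x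
  exact ⟨r * p, mul_nonneg hr hp, by simp [hfx]⟩

theorem ofReal_smul_mem_of_eq_submodule_or_posPartSet {A : Set C₀(X, ℂ)}
    (hA : (∃ S : Submodule ℂ C₀(X, ℂ), A = (S : Set C₀(X, ℂ))) ∨
          (∃ S : Submodule ℂ C₀(X, ℂ), A = posPartSet (S : Set C₀(X, ℂ))))
    {r : ℝ} (hr : 0 ≤ r) {f : C₀(X, ℂ)} (hf : f ∈ A) : (r : ℂ) • f ∈ A := by
  rcases hA with ⟨S, rfl⟩ | ⟨S, rfl⟩
  · exact S.smul_mem _ hf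
  · exact ofReal_smul_mem_posPartSet hr hf

theorem apply_eq_and_norm_eq_of_mem_smul_Vset {A : Set C₀(X, ℂ)} {x₀ : X} {a : ℂ}
    {f : C₀(X, ℂ)} (hf : f ∈ a • Vset A x₀) : f x₀ = a ∧ ‖f‖ = ‖a‖ := by
  obtain ⟨k, ⟨-, hk₀, hk⟩, rfl⟩ := hf
  exact ⟨by simp [hk₀], by rw [norm_smul, hk, mul_one]⟩

theorem mem_maxSet_of_mem_smul_Vset {A : Set C₀(X, ℂ)} {x₀ : X} {a : ℂ} {f : C₀(X, ℂ)}
    (hf : f ∈ a • Vset A x₀) : x₀ ∈ maxSet f := by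
  obtain ⟨h₀, hnorm⟩ := apply_eq_and_norm_eq_of_mem_smul_Vset hf
  simp [maxSet, h₀, hnorm]

theorem IsStrongBoundaryPoint.exists_mem_Vset_forall_or {A : Set C₀(X, ℂ)} {x₀ : X}
    (hx₀ : IsStrongBoundaryPoint A x₀) {F : X → ℝ} (hF : Continuous F) {a : ℝ} (ha : F x₀ < a)
    {ε : ℝ} (hε : 0 < ε) : ∃ k ∈ Vset A x₀, ∀ x, F x < a ∨ ‖k x‖ < ε := by
  obtain ⟨k, hkA, hk₀, hk, hsmall⟩ :=
    hx₀ ε hε _ ((isOpen_lt hF continuous_const).mem_nhds ha)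
  exact ⟨k, ⟨hkA, hk₀, hk⟩, fun x => or_iff_not_imp_left.2 (hsmall x)⟩

end Boundary

section Isometry

variable {X Y : Type*} [TopologicalSpace X] [TopologicalSpace Y] {φ : ℂ → ℂ → ℝ} {c : Bool}
  {A : Set C₀(X, ℂ)} {B : Set C₀(Y, ℂ)} {T : C₀(X, ℂ) → C₀(Y, ℂ)} {x₀ : X} {y₀ : Y}

theorem mem_maxSet_map_of_mem_maxSet (hinc : IncProp φ) [Nonempty Y]
    (hT : ∀ f ∈ A, ∀ g ∈ A, rhoGen c φ (T f) (T g) = rhoGen c φ f g)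
    (hnorm : ∀ f ∈ A, ‖T f‖ = ‖f‖) (hBsmul : ∀ (r : ℝ), 0 ≤ r → ∀ g ∈ B, (r : ℂ) • g ∈ B)
    (hTsurj : Set.SurjOn T A B) (hy₀ : IsStrongBoundaryPoint B y₀) {r : ℝ} (hr : 0 < r)
    (hI : ∀ g ∈ A, T g ∈ (r : ℂ) • Vset B y₀ → x₀ ∈ maxSet g)
    {h : C₀(X, ℂ)} (hhA : h ∈ A) (hh : x₀ ∈ maxSet h) : y₀ ∈ maxSet (T h) := by
  by_contra hne
  have hlt : ‖T h y₀‖ < ‖T h‖ := (norm_apply_le _ _).lt_of_ne hne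
  obtain ⟨u, hu, hsep⟩ := hy₀.exists_mem_Vset_forall_or (map_continuous (T h)).norm
    (left_lt_add_div_two.2 hlt) one_half_pos
  obtain ⟨g, hgA, hTg⟩ := hTsurj (hBsmul r hr.le u hu.1)
  have hTgV : T g ∈ (r : ℂ) • Vset B y₀ := hTg ▸ Set.smul_mem_smul_set hu
  have hTgnorm : ‖T g‖ = r := by
    rw [(apply_eq_and_norm_eq_of_mem_smul_Vset hTgV).2, Complex.norm_of_nonneg hr.le]
  obtain ⟨y, hay, hry⟩ := exists_lt_norm_apply_of_rhoGen_eq hinc hh (hI g hgA hTgV)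
    (hnorm h hhA) (hnorm g hgA) (hT h hhA g hgA) (by positivity) (half_pos hr).le
    (add_div_two_lt_right.2 hlt) (hTgnorm.symm ▸ half_lt_self hr)
  rw [hTg, ZeroAtInftyContinuousMap.smul_apply, norm_smul, Complex.norm_of_nonneg hr.le] at hry
  rcases hsep y with hy | hy
  · exact hy.not_gt hay
  · nlinarith

theorem mem_maxSet_of_mem_maxSet_map (hinc : IncProp φ) [Nonempty X]
    (hT : ∀ f ∈ A, ∀ g ∈ A, rhoGen c φ (T f) (T g) = rhoGen c φ f g)
    (hnorm : ∀ f ∈ A, ‖T f‖ = ‖f‖) (hAsmul : ∀ (t : ℝ), 0 ≤ t → ∀ f ∈ A, (t : ℂ) • f ∈ A)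
    (hx₀ : IsStrongBoundaryPoint A x₀) {t : ℝ} (ht : 0 < t)
    (hJ : ∀ h ∈ (t : ℂ) • Vset A x₀, y₀ ∈ maxSet (T h))
    {f : C₀(X, ℂ)} (hfA : f ∈ A) (hf : y₀ ∈ maxSet (T f)) : x₀ ∈ maxSet f := by
  by_contra hne
  have hlt : ‖f x₀‖ < ‖f‖ := (norm_apply_le _ _).lt_of_ne hne
  obtain ⟨k, hk, hsep⟩ := hx₀.exists_mem_Vset_forall_or (map_continuous f).norm
    (left_lt_add_div_two.2 hlt) one_half_pos
  have htkA : (t : ℂ) • k ∈ A := hAsmul t ht.le k hk.1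
  have htkV : (t : ℂ) • k ∈ (t : ℂ) • Vset A x₀ := Set.smul_mem_smul_set hk
  have htknorm : ‖(t : ℂ) • k‖ = t := by
    rw [(apply_eq_and_norm_eq_of_mem_smul_Vset htkV).2, Complex.norm_of_nonneg ht.le]
  obtain ⟨x, hax, htx⟩ := exists_lt_norm_apply_of_rhoGen_eq hinc hf (hJ _ htkV)
    (hnorm f hfA).symm (hnorm _ htkA).symm (hT f hfA _ htkA).symm (by positivity)
    (half_pos ht).le (add_div_two_lt_right.2 hlt) (htknorm.symm ▸ half_lt_self ht)
  rw [ZeroAtInftyContinuousMap.smul_apply, norm_smul, Complex.norm_of_nonneg ht.le] at htx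
  rcases hsep x with hx | hx
  · exact hx.not_gt hax
  · nlinarith

theorem mem_iInter_maxSet_iff (hinc : IncProp φ)
    (hT : ∀ f ∈ A, ∀ g ∈ A, rhoGen c φ (T f) (T g) = rhoGen c φ f g)
    (hAsmul : ∀ (t : ℝ), 0 ≤ t → ∀ f ∈ A, (t : ℂ) • f ∈ A)
    (hBsmul : ∀ (r : ℝ), 0 ≤ r → ∀ g ∈ B, (r : ℂ) • g ∈ B) (hTsurj : Set.SurjOn T A B)
    (hx₀ : IsStrongBoundaryPoint A x₀) (hy₀ : IsStrongBoundaryPoint B y₀)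
    {r t : ℝ} (hr : 0 < r) (ht : 0 < t) :
    x₀ ∈ (⋂ f ∈ {f : C₀(X, ℂ) | f ∈ A ∧ T f ∈ (r : ℂ) • Vset B y₀}, maxSet f) ↔
      y₀ ∈ (⋂ f ∈ (t : ℂ) • Vset A x₀, maxSet (T f)) := by
  have : Nonempty X := ⟨x₀⟩
  have : Nonempty Y := ⟨y₀⟩
  have hnorm (f) (hf : f ∈ A) : ‖T f‖ = ‖f‖ := norm_eq_of_rhoGen_self_eq hinc c (hT f hf f hf)
  simp only [Set.mem_iInter₂, Set.mem_ofPred_eq, and_imp]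
  constructor
  · intro hI h hh
    obtain ⟨k, hk, rfl⟩ := hh
    exact mem_maxSet_map_of_mem_maxSet hinc hT hnorm hBsmul hTsurj hy₀ hr hI
      (hAsmul t ht.le k hk.1) (mem_maxSet_of_mem_smul_Vset (Set.smul_mem_smul_set hk))
  · intro hJ f hfA hTf
    exact mem_maxSet_of_mem_maxSet_map hinc hT hnorm hAsmul hx₀ ht hJ hfA
      (mem_maxSet_of_mem_smul_Vset hTf)

end Isometry

theorem stmt10_general {X Y : Type*} [TopologicalSpace X] [TopologicalSpace Y]
    (φ : ℂ → ℂ → ℝ) (hinc : IncProp φ)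
    (A : Set C₀(X, ℂ)) (B : Set C₀(Y, ℂ))
    (hA : (∃ S : Submodule ℂ C₀(X, ℂ), A = (S : Set C₀(X, ℂ))) ∨
          (∃ S : Submodule ℂ C₀(X, ℂ), A = posPartSet (S : Set C₀(X, ℂ))))
    (hB : (∃ S : Submodule ℂ C₀(Y, ℂ), B = (S : Set C₀(Y, ℂ))) ∨
          (∃ S : Submodule ℂ C₀(Y, ℂ), B = posPartSet (S : Set C₀(Y, ℂ))))
    (𝒜 : NonUnitalSubalgebra ℂ C₀(X, ℂ)) (ℬ : NonUnitalSubalgebra ℂ C₀(Y, ℂ))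
    (hbd𝒜 : ∀ x : X, IsStrongBoundaryPoint A x ↔ InChoquetBoundary 𝒜.toSubmodule x)
    (hbdℬ : ∀ y : Y, IsStrongBoundaryPoint B y ↔ InChoquetBoundary ℬ.toSubmodule y)
    (T : C₀(X, ℂ) → C₀(Y, ℂ)) (hTsurj : Set.SurjOn T A B)
    (c : Bool)
    (hT : ∀ f ∈ A, ∀ g ∈ A,
      rhoGen c φ (fun y => T f y) (fun y => T g y) =
        rhoGen c φ (fun x => f x) (fun x => g x))
    (x₀ : X) (hx₀ : InChoquetBoundary 𝒜.toSubmodule x₀)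
    (y₀ : Y) (hy₀ : InChoquetBoundary ℬ.toSubmodule y₀)
    (s : ℝ) (hs : 0 < s) :
    (x₀ ∈ (⋂ f ∈ {f : C₀(X, ℂ) | f ∈ A ∧ T f ∈ (1 : ℂ) • Vset B y₀}, maxSet f) ↔ y₀ ∈ (⋂ f ∈ (s : ℂ) • Vset A x₀, maxSet (T f))) ∧
    (y₀ ∈ (⋂ f ∈ (1 : ℂ) • Vset A x₀, maxSet (T f)) ↔ x₀ ∈ (⋂ f ∈ {f : C₀(X, ℂ) | f ∈ A ∧ T f ∈ (s : ℂ) • Vset B y₀}, maxSet f)) := by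
  have key {r t : ℝ} (hr : 0 < r) (ht : 0 < t) :=
    mem_iInter_maxSet_iff hinc hT
      (fun _ ht f hf => ofReal_smul_mem_of_eq_submodule_or_posPartSet hA ht hf)
      (fun _ hr g hg => ofReal_smul_mem_of_eq_submodule_or_posPartSet hB hr hg) hTsurj
      ((hbd𝒜 x₀).2 hx₀) ((hbdℬ y₀).2 hy₀) hr ht
  have key₁ := key one_pos hs
  have key₂ := key hs one_pos
  rw [Complex.ofReal_one] at key₁ key₂
  exact ⟨key₁, key₂.symm⟩

theorem stmt10 {X Y : Type*} [TopologicalSpace X] [LocallyCompactSpace X] [T2Space X] [TopologicalSpace Y] [LocallyCompactSpace Y] [T2Space Y]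
    (φ : ℂ → ℂ → ℝ) (hφc : Continuous fun p : ℂ × ℂ => φ p.1 p.2)
    (hφ0 : ∀ s t : ℂ, 0 ≤ φ s t) (hinc : IncProp φ) (hcon : ConProp φ)
    (A : Set C₀(X, ℂ)) (B : Set C₀(Y, ℂ))
    (hA : (∃ S : Submodule ℂ C₀(X, ℂ), A = (S : Set C₀(X, ℂ))) ∨
          (∃ S : Submodule ℂ C₀(X, ℂ), A = posPartSet (S : Set C₀(X, ℂ))))
    (hB : (∃ S : Submodule ℂ C₀(Y, ℂ), B = (S : Set C₀(Y, ℂ))) ∨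
          (∃ S : Submodule ℂ C₀(Y, ℂ), B = posPartSet (S : Set C₀(Y, ℂ))))
    (𝒜 : NonUnitalSubalgebra ℂ C₀(X, ℂ)) (ℬ : NonUnitalSubalgebra ℂ C₀(Y, ℂ))
    (h𝒜 : IsFunctionAlgebra 𝒜) (hℬ : IsFunctionAlgebra ℬ)
    (hbd𝒜 : ∀ x : X, IsStrongBoundaryPoint A x ↔ InChoquetBoundary 𝒜.toSubmodule x)
    (hbdℬ : ∀ y : Y, IsStrongBoundaryPoint B y ↔ InChoquetBoundary ℬ.toSubmodule y)
    (hmodA : ModulusSubset A (𝒜 : Set C₀(X, ℂ)))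
    (hmodB : ModulusSubset B (ℬ : Set C₀(Y, ℂ)))
    (T : C₀(X, ℂ) → C₀(Y, ℂ)) (hTmaps : Set.MapsTo T A B) (hTsurj : Set.SurjOn T A B)
    (c : Bool)
    (hT : ∀ f ∈ A, ∀ g ∈ A,
      rhoGen c φ (fun y => T f y) (fun y => T g y) =
        rhoGen c φ (fun x => f x) (fun x => g x))
    (x₀ : X) (hx₀ : InChoquetBoundary 𝒜.toSubmodule x₀)
    (y₀ : Y) (hy₀ : InChoquetBoundary ℬ.toSubmodule y₀)
    (s : ℝ) (hs : 0 < s) :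
    (x₀ ∈ (⋂ f ∈ {f : C₀(X, ℂ) | f ∈ A ∧ T f ∈ (1 : ℂ) • Vset B y₀}, maxSet f) ↔ y₀ ∈ (⋂ f ∈ (s : ℂ) • Vset A x₀, maxSet (T f))) ∧
    (y₀ ∈ (⋂ f ∈ (1 : ℂ) • Vset A x₀, maxSet (T f)) ↔ x₀ ∈ (⋂ f ∈ {f : C₀(X, ℂ) | f ∈ A ∧ T f ∈ (s : ℂ) • Vset B y₀}, maxSet f)) :=
  stmt10_general φ hinc A B hA hB 𝒜 ℬ hbd𝒜 hbdℬ T hTsurj c hT x₀ hx₀ y₀ hy₀ s hs
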